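/- arXiv:2408.04393 — 6 statements merged into one kernel-verified Lean document; each statement's English description precedes it below -/
import Mathlib

section
/- Let G be a finite simple graph and let c be an improper interval edge coloring of G. Then for every walk p_0 p_1 ⋯ p_l p_{l+1} in G (with l ≥ 1), we have |c(p_0 p_1) − c(p_l p_{l+1})| ≤ Σ_{i=1}^{l} (deg_G(p_i) − 1). -/
/-- A (not necessarily proper) edge coloring `c : Sym2 V → ℤ` of a graph `G` is an
*improper interval edge coloring* if for every vertex `v` the set of colors of the
edges incident with `v` is an interval of integers. -/
def IsImproperIntervalColoring {V : Type*} (G : SimpleGraph V) (c : Sym2 V → ℤ) : Prop :=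
  ∀ v : V, ∀ a ∈ c '' G.incidenceSet v, ∀ b ∈ c '' G.incidenceSet v,
    ∀ x : ℤ, a ≤ x → x ≤ b → x ∈ c '' G.incidenceSet v

lemma key_abs_le {V : Type*} [Fintype V] (G : SimpleGraph V) [DecidableRel G.Adj]
    (c : Sym2 V → ℤ) (hc : IsImproperIntervalColoring G c) (v : V) (e f : Sym2 V)
    (he : e ∈ G.incidenceSet v) (hf : f ∈ G.incidenceSet v) :
    |c e - c f| ≤ (G.degree v : ℤ) - 1 := by
  classical
  have main : ∀ e f : Sym2 V, e ∈ G.incidenceSet v → f ∈ G.incidenceSet v →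
      c e ≤ c f → c f - c e ≤ (G.degree v : ℤ) - 1 := by
    intro e f he hf hle
    have hsub : Finset.Icc (c e) (c f) ⊆ (G.incidenceFinset v).image c := by
      intro x hx
      rw [Finset.mem_Icc] at hx
      have := hc v (c e) ⟨e, he, rfl⟩ (c f) ⟨f, hf, rfl⟩ x hx.1 hx.2
      obtain ⟨g, hg, hgx⟩ := this
      exact Finset.mem_image.2 ⟨g, by rwa [SimpleGraph.mem_incidenceFinset], hgx⟩
    have h1 : (Finset.Icc (c e) (c f)).card ≤ ((G.incidenceFinset v).image c).card :=
      Finset.card_le_card hsub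
    have h2 : ((G.incidenceFinset v).image c).card ≤ G.degree v := by
      calc ((G.incidenceFinset v).image c).card ≤ (G.incidenceFinset v).card :=
            Finset.card_image_le
        _ = G.degree v := G.card_incidenceFinset_eq_degree v
    have h3 : (Finset.Icc (c e) (c f)).card = (c f + 1 - c e).toNat := Int.card_Icc _ _
    have h4 : (c f + 1 - c e).toNat ≤ G.degree v := by omega
    have h5 : c f + 1 - c e ≤ (G.degree v : ℤ) := by omega
    omega
  rcases le_total (c e) (c f) with h | h
  · rw [abs_sub_comm, abs_of_nonneg (by omega)]
    exact main e f he hf h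
  · rw [abs_of_nonneg (by omega)]
    exact main f e hf he h

/-- If `c` is an improper interval edge coloring of a finite simple graph `G`, then for any
walk `p 0, p 1, …, p l, p (l+1)` in `G` (with `l ≥ 1`),
`|c (p 0)(p 1) − c (p l)(p (l+1))| ≤ ∑_{i=1}^{l} (deg_G (p i) − 1)`. -/
theorem abs_color_sub_le_sum_degrees {V : Type*} [Fintype V] (G : SimpleGraph V)
    [DecidableRel G.Adj] (c : Sym2 V → ℤ) (hc : IsImproperIntervalColoring G c)
    (l : ℕ) (hl : 1 ≤ l) (p : ℕ → V) (hwalk : ∀ i ≤ l, G.Adj (p i) (p (i + 1))) :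
    |c s(p 0, p 1) - c s(p l, p (l + 1))| ≤
      ∑ i ∈ Finset.Icc 1 l, ((G.degree (p i) : ℤ) - 1) := by
  induction l, hl using Nat.le_induction with
  | base =>
    simp only [Finset.Icc_self, Finset.sum_singleton]
    have h01 : G.Adj (p 0) (p 1) := hwalk 0 (by norm_num)
    have h12 : G.Adj (p 1) (p 2) := hwalk 1 le_rfl
    exact key_abs_le G c hc (p 1) _ _
      ⟨G.mem_edgeSet.mpr h01, by simp⟩ ⟨G.mem_edgeSet.mpr h12, by simp⟩
  | succ n hn ih =>
    have ih' := ih (fun i hi => hwalk i (by omega))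
    have hn1 : G.Adj (p n) (p (n + 1)) := hwalk n (by omega)
    have hn2 : G.Adj (p (n + 1)) (p (n + 2)) := hwalk (n + 1) le_rfl
    have hstep : |c s(p n, p (n + 1)) - c s(p (n + 1), p (n + 2))| ≤
        (G.degree (p (n + 1)) : ℤ) - 1 :=
      key_abs_le G c hc (p (n + 1)) _ _ ⟨G.mem_edgeSet.mpr hn1, by simp⟩ ⟨G.mem_edgeSet.mpr hn2, by simp⟩
    rw [Finset.sum_Icc_succ_top (by omega : 1 ≤ n + 1)]
    calc |c s(p 0, p 1) - c s(p (n + 1), p (n + 1 + 1))|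
        ≤ |c s(p 0, p 1) - c s(p n, p (n + 1))| +
          |c s(p n, p (n + 1)) - c s(p (n + 1), p (n + 2))| := abs_sub_le _ _ _
      _ ≤ (∑ i ∈ Finset.Icc 1 n, ((G.degree (p i) : ℤ) - 1)) +
          ((G.degree (p (n + 1)) : ℤ) - 1) := add_le_add ih' hstep
end

section
/- Let T be a finite tree, let f_0 be a vertex of T, and let F be a nonempty set of vertices of T such that the subgraph of T induced by F is a path. Then there is exactly one vertex f ∈ F attaining the minimum min_{f ∈ F} d_T(f, f_0), where d_T denotes graph distance in T. -/
open SimpleGraph Walk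

private lemma path_length_eq_dist' {V : Type*} [DecidableEq V] {T : SimpleGraph V} (hT : T.IsTree) {u v : V}
    (p : T.Walk u v) (hp : p.IsPath) : p.length = T.dist u v := by
  obtain ⟨q, hq⟩ := (hT.isConnected u v).exists_walk_length_eq_dist
  have h1 : (⟨p, hp⟩ : T.Path u v) = q.toPath := hT.IsAcyclic.path_unique _ _
  have h2 : p = q.bypass := congrArg Subtype.val h1
  have h3 : q.bypass.length ≤ T.dist u v := hq ▸ q.length_bypass_le
  have h4 : T.dist u v ≤ p.length := T.dist_le p
  have h5 : p.length = q.bypass.length := by rw [h2]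
  omega

private lemma concat_isPath' {V : Type*} [DecidableEq V] {T : SimpleGraph V} {u v w : V}
    (p : T.Walk u v) (hp : p.IsPath) (h : T.Adj v w) (hw : w ∉ p.support) :
    (p.concat h).IsPath := by
  rw [← Walk.isPath_reverse_iff, Walk.reverse_concat]
  exact (hp.reverse).cons (by simpa using hw)

private lemma not_mem_support_of_dist_lt {V : Type*} [DecidableEq V] {T : SimpleGraph V} (hT : T.IsTree)
    {f0 u w : V} (p : T.Walk f0 u) (hp : p.IsPath) (hlt : p.length < T.dist f0 w) :
    w ∉ p.support := by
  intro hmem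
  have h1 : (p.takeUntil w hmem).IsPath := hp.takeUntil hmem
  have h2 := path_length_eq_dist' hT _ h1
  have h3 := p.length_takeUntil_le hmem
  omega

private lemma dist_ne_of_adj' {V : Type*} [DecidableEq V] {T : SimpleGraph V} (hT : T.IsTree) (f0 : V)
    {u w : V} (h : T.Adj u w) : T.dist f0 u ≠ T.dist f0 w := by
  intro he
  obtain ⟨p, hp⟩ := (hT.isConnected f0 u).exists_walk_length_eq_dist
  have hbp : p.bypass.IsPath := p.bypass_isPath
  have hbl : p.bypass.length = T.dist f0 u := path_length_eq_dist' hT _ hbp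
  by_cases hw : w ∈ p.bypass.support
  · have h1 : (p.bypass.takeUntil w hw).IsPath := hbp.takeUntil hw
    have h2 : (p.bypass.takeUntil w hw).length = T.dist f0 w := path_length_eq_dist' hT _ h1
    have h3 := congrArg Walk.length (p.bypass.take_spec hw)
    rw [Walk.length_append] at h3
    have h4 : (p.bypass.dropUntil w hw).length = 0 := by omega
    have h5 := Walk.eq_of_length_eq_zero h4
    exact h.ne' h5
  · have h1 : (p.bypass.concat h).IsPath := concat_isPath' _ hbp h hw
    have h2 := path_length_eq_dist' hT _ h1
    rw [Walk.length_concat] at h2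
    omega

private lemma dist_succ_of_adj' {V : Type*} [DecidableEq V] {T : SimpleGraph V} (hT : T.IsTree) (f0 : V)
    {u w : V} (h : T.Adj u w) :
    T.dist f0 w = T.dist f0 u + 1 ∨ T.dist f0 u = T.dist f0 w + 1 := by
  have h1 : T.dist f0 u ≤ T.dist f0 w + 1 := by
    calc T.dist f0 u ≤ T.dist f0 w + T.dist w u := hT.isConnected.dist_triangle
    _ ≤ T.dist f0 w + 1 := by
        rw [(T.dist_eq_one_iff_adj).mpr h.symm]
  have h2 : T.dist f0 w ≤ T.dist f0 u + 1 := by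
    calc T.dist f0 w ≤ T.dist f0 u + T.dist u w := hT.isConnected.dist_triangle
    _ ≤ T.dist f0 u + 1 := by
        rw [(T.dist_eq_one_iff_adj).mpr h]
  have h3 := dist_ne_of_adj' hT f0 h
  omega

private lemma eq_of_adj_of_dist_lt' {V : Type*} [DecidableEq V] {T : SimpleGraph V} (hT : T.IsTree) (f0 : V)
    {u v w : V} (hu : T.Adj u w) (hv : T.Adj v w)
    (hdu : T.dist f0 u + 1 = T.dist f0 w) (hdv : T.dist f0 v + 1 = T.dist f0 w) : u = v := by
  obtain ⟨pu, hpu⟩ := (hT.isConnected f0 u).exists_walk_length_eq_dist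
  obtain ⟨pv, hpv⟩ := (hT.isConnected f0 v).exists_walk_length_eq_dist
  have hbu : pu.bypass.IsPath := pu.bypass_isPath
  have hbv : pv.bypass.IsPath := pv.bypass_isPath
  have hlu : pu.bypass.length = T.dist f0 u := path_length_eq_dist' hT _ hbu
  have hlv : pv.bypass.length = T.dist f0 v := path_length_eq_dist' hT _ hbv
  have hwu : w ∉ pu.bypass.support := not_mem_support_of_dist_lt hT _ hbu (by omega)
  have hwv : w ∉ pv.bypass.support := not_mem_support_of_dist_lt hT _ hbv (by omega)
  have hqu : (pu.bypass.concat hu).IsPath := concat_isPath' _ hbu hu hwu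
  have hqv : (pv.bypass.concat hv).IsPath := concat_isPath' _ hbv hv hwv
  have heq : (⟨pu.bypass.concat hu, hqu⟩ : T.Path f0 w) = ⟨pv.bypass.concat hv, hqv⟩ :=
    hT.IsAcyclic.path_unique _ _
  have heq2 : pu.bypass.concat hu = pv.bypass.concat hv := congrArg Subtype.val heq
  have heq3 : (pu.bypass.concat hu).reverse = (pv.bypass.concat hv).reverse := by rw [heq2]
  rw [Walk.reverse_concat, Walk.reverse_concat] at heq3
  have := congrArg (fun q => q.getVert 1) heq3
  simpa [Walk.getVert_cons_succ] using this

/-- Let `T` be a finite tree, `f₀` a vertex of `T`, and `F` a nonempty set of vertices of `T`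
whose induced subgraph is a path (a path graph on `nn ≥ 1` vertices, possibly a single
vertex). Then there is exactly one vertex `f ∈ F` attaining `min_{f ∈ F} d_T(f, f₀)`. -/
theorem existsUnique_min_dist_of_induce_path {V : Type*} [Fintype V]
    (T : SimpleGraph V) (hT : T.IsTree) (f0 : V) (F : Set V) (hF : F.Nonempty)
    (nn : ℕ) (hnn : 1 ≤ nn)
    (hpath : Nonempty (T.induce F ≃g SimpleGraph.pathGraph nn)) :
    ∃! f : V, f ∈ F ∧ ∀ g ∈ F, T.dist f f0 ≤ T.dist g f0 := by
  classical
  obtain ⟨f, hfF, hfmin⟩ := Set.exists_min_image F (fun v => T.dist v f0) (Set.toFinite F) hF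
  refine ⟨f, ⟨hfF, hfmin⟩, ?_⟩
  rintro g ⟨hgF, hgmin⟩
  obtain ⟨e⟩ := hpath
  -- setup
  set m := T.dist f0 f with hm
  have hmg : T.dist f0 g = m := by
    rw [hm, SimpleGraph.dist_comm (u := f0) (v := g), SimpleGraph.dist_comm (u := f0) (v := f)]
    exact le_antisymm (hgmin f hfF) (hfmin g hgF)
  have hmlow : ∀ v ∈ F, m ≤ T.dist f0 v := by
    intro v hv
    rw [hm, SimpleGraph.dist_comm (u := f0) (v := v), SimpleGraph.dist_comm (u := f0) (v := f)]
    exact hfmin v hv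
  set x : Fin nn → V := fun k => (e.symm k : V) with hx
  have hxF : ∀ k, x k ∈ F := fun k => (e.symm k).2
  have hadj : ∀ k l : Fin nn, (k : ℕ) + 1 = (l : ℕ) → T.Adj (x k) (x l) := by
    intro k l hkl
    have : (SimpleGraph.pathGraph nn).Adj k l := SimpleGraph.pathGraph_adj.mpr (Or.inl hkl)
    have h2 : (T.induce F).Adj (e.symm k) (e.symm l) := e.symm.map_adj_iff.mpr this
    exact h2
  set d : Fin nn → ℕ := fun k => T.dist f0 (x k) with hd
  have hstep : ∀ k l : Fin nn, (k : ℕ) + 1 = (l : ℕ) → d l = d k + 1 ∨ d k = d l + 1 :=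
    fun k l h => dist_succ_of_adj' hT f0 (hadj k l h)
  -- the key claim
  have key : ∀ (a b : V) (ha : a ∈ F) (hb : b ∈ F), T.dist f0 a = m → T.dist f0 b = m →
      ((e ⟨a, ha⟩ : Fin nn) : ℕ) < ((e ⟨b, hb⟩ : Fin nn) : ℕ) → False := by
    intro a b ha hb hda hdb hij
    set i := e ⟨a, ha⟩ with hi
    set j := e ⟨b, hb⟩ with hj
    have hxi : x i = a := by simp [hx, hi]
    have hxj : x j = b := by simp [hx, hj]
    have hdi : d i = m := by rw [hd]; simp only; rw [hxi, hda]
    have hdj : d j = m := by rw [hd]; simp only; rw [hxj, hdb]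
    have hdlow : ∀ k, m ≤ d k := fun k => hmlow _ (hxF k)
    -- max over Icc i j
    obtain ⟨k0, hk0mem, hk0max⟩ :=
      Finset.exists_max_image (Finset.Icc i j) d ⟨i, by simp [Finset.mem_Icc, le_of_lt (by exact_mod_cast hij : i < j)]⟩
    rw [Finset.mem_Icc] at hk0mem
    -- d (i+1) = m + 1
    have hjlt : (j : ℕ) < nn := j.isLt
    have hi1lt : (i : ℕ) + 1 < nn := by omega
    set i1 : Fin nn := ⟨(i : ℕ) + 1, hi1lt⟩ with hi1
    have hstepi : d i1 = d i + 1 ∨ d i = d i1 + 1 := hstep i i1 rfl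
    have hdi1 : d i1 = m + 1 := by have := hdlow i1; omega
    have hi1mem : i1 ∈ Finset.Icc i j := by
      rw [Finset.mem_Icc]
      constructor
      · exact Fin.le_def.mpr (by simp [hi1])
      · exact Fin.le_def.mpr (by simp [hi1]; omega)
    have hk0big : m + 1 ≤ d k0 := hdi1 ▸ hk0max i1 hi1mem
    have hik0 : (i : ℕ) < (k0 : ℕ) := by
      rcases lt_or_eq_of_le (Fin.le_def.mp hk0mem.1) with h | h
      · exact h
      · exfalso; have : d i = d k0 := by congr 1; exact Fin.ext h
        omega
    have hk0j : (k0 : ℕ) < (j : ℕ) := by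
      rcases lt_or_eq_of_le (Fin.le_def.mp hk0mem.2) with h | h
      · exact h
      · exfalso; have : d k0 = d j := by congr 1; exact Fin.ext h
        omega
    -- neighbors
    set ka : Fin nn := ⟨(k0 : ℕ) - 1, by omega⟩ with hka
    set kb : Fin nn := ⟨(k0 : ℕ) + 1, by omega⟩ with hkb
    have hkamem : ka ∈ Finset.Icc i j := by
      rw [Finset.mem_Icc]
      exact ⟨Fin.le_def.mpr (by simp [hka]; omega), Fin.le_def.mpr (by simp [hka]; omega)⟩
    have hkbmem : kb ∈ Finset.Icc i j := by
      rw [Finset.mem_Icc]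
      exact ⟨Fin.le_def.mpr (by simp [hkb]; omega), Fin.le_def.mpr (by simp [hkb]; omega)⟩
    have hadja : T.Adj (x ka) (x k0) := hadj ka k0 (by simp [hka]; omega)
    have hadjb : T.Adj (x kb) (x k0) := (hadj k0 kb (by simp [hkb])).symm
    have hda' : d k0 = d ka + 1 := by
      rcases hstep ka k0 (by simp [hka]; omega) with h | h
      · exact h
      · exfalso; have := hk0max ka hkamem; omega
    have hdb' : d k0 = d kb + 1 := by
      rcases hstep k0 kb (by simp [hkb]) with h | h
      · exfalso; have := hk0max kb hkbmem; omega
      · exact h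
    have heq : x ka = x kb :=
      eq_of_adj_of_dist_lt' hT f0 hadja hadjb
        (by simp only [hd] at hda'; omega) (by simp only [hd] at hdb'; omega)
    have : ka = kb := by
      apply e.symm.injective
      exact Subtype.val_injective heq
    have h2 : ((k0 : ℕ) - 1) = ((k0 : ℕ) + 1) := congrArg Fin.val this
    omega
  -- finish
  by_contra hne
  have hsub : (⟨f, hfF⟩ : F) ≠ ⟨g, hgF⟩ := fun h => hne (congrArg Subtype.val h).symm
  have hij : e ⟨f, hfF⟩ ≠ e ⟨g, hgF⟩ := fun h => hsub (e.injective h)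
  have hmf : T.dist f0 f = m := by rw [hm]
  rcases lt_or_gt_of_ne hij with h | h
  · exact key f g hfF hgF hmf hmg (by exact_mod_cast h)
  · exact key g f hgF hfF hmg hmf (by exact_mod_cast h)
end

section
/- Fix integers k ≥ 2, m ≥ 1, n ≥ 1, and let G = T_{m,n}^{(k)}. Let c be an improper interval edge coloring of G with c(w_1 v_0) = 0. Then for every i ∈ [n] and j ∈ [m], we have |c(v_i^{(j)} w_1)| ≤ m + (n+1)k − 2. -/
/-- The vertex type of the graph `T_{m,n}^{(k)}`: `Sum.inl i` is the vertex `w_{i+1}`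
(for `i : Fin (k-1)`), `Sum.inr none` is the center `v₀`, and `Sum.inr (some (i, j))`
is the vertex `v_{i+1}^{(j+1)}` (for `i : Fin n`, `j : Fin m`). -/
abbrev TVertex (k m n : ℕ) : Type := Fin (k - 1) ⊕ Option (Fin n × Fin m)

/-- The underlying (asymmetric) relation generating the edges of `T_{m,n}^{(k)}`:
each `w` vertex is joined to everything else, `v₀` is joined to each `v_1^{(j)}`, and
`v_i^{(j)}` is joined to `v_{i+1}^{(j)}`. -/
def TrelB (k m n : ℕ) : TVertex k m n → TVertex k m n → Bool
  | Sum.inl _, _ => true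
  | Sum.inr none, Sum.inr (some p) => decide ((p.1 : ℕ) = 0)
  | Sum.inr (some p), Sum.inr (some q) => decide (p.2 = q.2 ∧ (q.1 : ℕ) = (p.1 : ℕ) + 1)
  | _, _ => false

/-- The graph `T_{m,n}^{(k)}`: subdivide each edge of the star `K_{1,m}` with center `v₀`
into a path of `n` edges, then join each of the vertices `w_1, …, w_{k-1}` (which form a
clique) to every other vertex. -/
def Tgraph (k m n : ℕ) : SimpleGraph (TVertex k m n) :=
  SimpleGraph.fromRel (fun x y => TrelB k m n x y = true)

/-- The vertex `w₁` of `T_{m,n}^{(k)}`. -/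
def wOne (k m n : ℕ) (hk : 2 ≤ k) : TVertex k m n := Sum.inl ⟨0, by omega⟩

/-- The center vertex `v₀` of `T_{m,n}^{(k)}`. -/
def vZero (k m n : ℕ) : TVertex k m n := Sum.inr none

/-- The vertex `v_{i+1}^{(j+1)}` of `T_{m,n}^{(k)}` (0-indexed arguments). -/
def vij (k m n : ℕ) (i : Fin n) (j : Fin m) : TVertex k m n := Sum.inr (some (i, j))

/- ------------------------------------------------------------------ -/
/- Auxiliary material for the proof.                                   -/
/- ------------------------------------------------------------------ -/

/-- Key counting lemma: if the incidence set at `v` is contained in a finite set `F`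
of edges, then any two colors appearing at `v` differ by at most `|F| - 1`. -/
lemma gap_le {V : Type*} (G : SimpleGraph V) (c : Sym2 V → ℤ)
    (hc : IsImproperIntervalColoring G c) (v : V) (F : Finset (Sym2 V))
    (hF : G.incidenceSet v ⊆ ↑F) {e₁ e₂ : Sym2 V}
    (h₁ : e₁ ∈ G.incidenceSet v) (h₂ : e₂ ∈ G.incidenceSet v) :
    |c e₁ - c e₂| ≤ (F.card : ℤ) - 1 := by
  have key : ∀ a b : Sym2 V, a ∈ G.incidenceSet v → b ∈ G.incidenceSet v →
      c a ≤ c b → c b - c a ≤ (F.card : ℤ) - 1 := by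
    intro a b ha hb hab
    have hIcc : Finset.Icc (c a) (c b) ⊆ F.image c := by
      intro x hx
      rw [Finset.mem_Icc] at hx
      obtain ⟨e, he, rfl⟩ := hc v (c a) ⟨a, ha, rfl⟩ (c b) ⟨b, hb, rfl⟩ x hx.1 hx.2
      exact Finset.mem_image.2 ⟨e, hF he, rfl⟩
    have h1 := Finset.card_le_card hIcc
    have h2 := Finset.card_image_le (s := F) (f := c)
    rw [Int.card_Icc] at h1
    omega
  rcases le_total (c e₁) (c e₂) with h | h
  · have := key _ _ h₁ h₂ h
    rw [abs_sub_comm, abs_of_nonneg (by omega)]; omega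
  · have := key _ _ h₂ h₁ h
    rw [abs_of_nonneg (by omega)]; omega

/-- The path-predecessor of `v_{i+1}^{(j+1)}`. -/
def prevV (k m n : ℕ) (i : Fin n) (j : Fin m) : TVertex k m n :=
  Sum.inr (if i.1 = 0 then none
    else some (⟨i.1 - 1, Nat.lt_of_le_of_lt (Nat.sub_le _ _) i.isLt⟩, j))

/-- The path-successor of `v_{i+1}^{(j+1)}` (or a dummy when there is none). -/
def nextV (k m n : ℕ) (i : Fin n) (j : Fin m) : TVertex k m n :=
  if h : i.1 + 1 < n then Sum.inr (some (⟨i.1 + 1, h⟩, j)) else prevV k m n i j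

lemma Tgraph_adj {k m n : ℕ} {x y : TVertex k m n} :
    (Tgraph k m n).Adj x y ↔
      x ≠ y ∧ (TrelB k m n x y = true ∨ TrelB k m n y x = true) := by
  unfold Tgraph
  exact SimpleGraph.fromRel_adj _ _ _

/-- A finite set of edges containing the incidence set of `v_{i+1}^{(j+1)}`. -/
def Fvij (k m n : ℕ) (i : Fin n) (j : Fin m) : Finset (Sym2 (TVertex k m n)) :=
  (Finset.univ.image fun t : Fin (k - 1) => s(vij k m n i j, Sum.inl t)) ∪
    {s(vij k m n i j, prevV k m n i j), s(vij k m n i j, nextV k m n i j)}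

lemma Fvij_card (k m n : ℕ) (i : Fin n) (j : Fin m) :
    (Fvij k m n i j).card ≤ (k - 1) + 2 := by
  refine (Finset.card_union_le _ _).trans ?_
  have h1 : (Finset.univ.image fun t : Fin (k - 1) => s(vij k m n i j, Sum.inl t)).card
      ≤ k - 1 := by
    refine (Finset.card_image_le).trans ?_
    simp
  have h2 : ({s(vij k m n i j, prevV k m n i j), s(vij k m n i j, nextV k m n i j)} :
      Finset (Sym2 (TVertex k m n))).card ≤ 2 := by
    refine (Finset.card_insert_le _ _).trans ?_
    simp
  omega

lemma incset_vij_subset (k m n : ℕ) (i : Fin n) (j : Fin m) :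
    (Tgraph k m n).incidenceSet (vij k m n i j) ⊆ ↑(Fvij k m n i j) := by
  have main : ∀ u : TVertex k m n, (Tgraph k m n).Adj (vij k m n i j) u →
      s(vij k m n i j, u) ∈ Fvij k m n i j := by
    intro u hu
    rw [Tgraph_adj] at hu
    obtain ⟨hne, hr⟩ := hu
    match u with
    | Sum.inl t =>
      exact Finset.mem_union_left _ (Finset.mem_image.2 ⟨t, Finset.mem_univ t, rfl⟩)
    | Sum.inr none =>
      have hi : i.1 = 0 := by
        rcases hr with hr | hr
        · simp [TrelB, vij] at hr
        · simpa [TrelB, vij] using hr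
      have hp : prevV k m n i j = Sum.inr none := by simp [prevV, hi]
      refine Finset.mem_union_right _ ?_
      rw [← hp]
      exact Finset.mem_insert_self _ _
    | Sum.inr (some (i', j')) =>
      rcases hr with hr | hr
      · have h1 : (j : Fin m) = j' ∧ (i' : ℕ) = i.1 + 1 := by
          simpa [TrelB, vij] using hr
        obtain ⟨hj, hi'⟩ := h1
        subst hj
        have hlt : i.1 + 1 < n := hi' ▸ i'.isLt
        have hi'' : i' = ⟨i.1 + 1, hlt⟩ := Fin.ext hi'
        subst hi''
        have hnx : nextV k m n i j = Sum.inr (some (⟨i.1 + 1, hlt⟩, j)) := by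
          simp [nextV, hlt]
        refine Finset.mem_union_right _ ?_
        rw [← hnx]
        exact Finset.mem_insert.2 (Or.inr (Finset.mem_singleton_self _))
      · have h1 : (j' : Fin m) = j ∧ (i : ℕ) = i'.1 + 1 := by
          simpa [TrelB, vij] using hr
        obtain ⟨hj, hi'⟩ := h1
        subst hj
        have hp : prevV k m n i j' = Sum.inr (some (i', j')) := by
          rw [prevV, if_neg (by omega)]
          have : i' = ⟨i.1 - 1, Nat.lt_of_le_of_lt (Nat.sub_le _ _) i.isLt⟩ :=
            Fin.ext (by show i'.1 = i.1 - 1; omega)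
          rw [this]
        refine Finset.mem_union_right _ ?_
        rw [← hp]
        exact Finset.mem_insert_self _ _
  intro e he
  induction e using Sym2.ind with
  | _ a b =>
    rw [SimpleGraph.mk'_mem_incidenceSet_iff] at he
    obtain ⟨hadj, hv⟩ := he
    rcases hv with hv | hv
    · rw [← hv] at hadj ⊢
      exact Finset.mem_coe.2 (main b (hv ▸ hadj))
    · rw [← hv] at hadj ⊢
      rw [Sym2.eq_swap]
      exact Finset.mem_coe.2 (main a hadj.symm)

/-- A finite set of edges containing the incidence set of `v₀`. -/
def Fv0 (k m n : ℕ) (hn : 0 < n) : Finset (Sym2 (TVertex k m n)) :=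
  (Finset.univ.image fun t : Fin (k - 1) => s(vZero k m n, Sum.inl t)) ∪
    (Finset.univ.image fun j : Fin m => s(vZero k m n, vij k m n ⟨0, hn⟩ j))

lemma Fv0_card (k m n : ℕ) (hn : 0 < n) : (Fv0 k m n hn).card ≤ (k - 1) + m := by
  refine (Finset.card_union_le _ _).trans ?_
  have h1 : (Finset.univ.image fun t : Fin (k - 1) => s(vZero k m n, Sum.inl t)).card
      ≤ k - 1 := (Finset.card_image_le).trans (by simp)
  have h2 : (Finset.univ.image fun j : Fin m => s(vZero k m n, vij k m n ⟨0, hn⟩ j)).card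
      ≤ m := (Finset.card_image_le).trans (by simp)
  omega

lemma incset_v0_subset (k m n : ℕ) (hn : 0 < n) :
    (Tgraph k m n).incidenceSet (vZero k m n) ⊆ ↑(Fv0 k m n hn) := by
  have main : ∀ u : TVertex k m n, (Tgraph k m n).Adj (vZero k m n) u →
      s(vZero k m n, u) ∈ Fv0 k m n hn := by
    intro u hu
    rw [Tgraph_adj] at hu
    obtain ⟨hne, hr⟩ := hu
    match u with
    | Sum.inl t =>
      exact Finset.mem_union_left _ (Finset.mem_image.2 ⟨t, Finset.mem_univ t, rfl⟩)
    | Sum.inr none => exact absurd rfl hne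
    | Sum.inr (some (i', j')) =>
      have hi : i'.1 = 0 := by
        rcases hr with hr | hr
        · simpa [TrelB, vZero] using hr
        · simp [TrelB, vZero] at hr
      have hi' : i' = ⟨0, hn⟩ := Fin.ext hi
      subst hi'
      exact Finset.mem_union_right _ (Finset.mem_image.2 ⟨j', Finset.mem_univ j', rfl⟩)
  intro e he
  induction e using Sym2.ind with
  | _ a b =>
    rw [SimpleGraph.mk'_mem_incidenceSet_iff] at he
    obtain ⟨hadj, hv⟩ := he
    rcases hv with hv | hv
    · rw [← hv] at hadj ⊢
      exact Finset.mem_coe.2 (main b hadj)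
    · rw [← hv] at hadj ⊢
      rw [Sym2.eq_swap]
      exact Finset.mem_coe.2 (main a hadj.symm)

lemma adj_w_v0 (k m n : ℕ) (hk : 2 ≤ k) :
    (Tgraph k m n).Adj (wOne k m n hk) (vZero k m n) := by
  rw [Tgraph_adj]
  exact ⟨by simp [wOne, vZero], Or.inl rfl⟩

lemma adj_vij_w (k m n : ℕ) (hk : 2 ≤ k) (i : Fin n) (j : Fin m) :
    (Tgraph k m n).Adj (vij k m n i j) (wOne k m n hk) := by
  rw [Tgraph_adj]
  exact ⟨by simp [wOne, vij], Or.inr rfl⟩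

lemma adj_vij_prev (k m n : ℕ) (i : Fin n) (j : Fin m) :
    (Tgraph k m n).Adj (vij k m n i j) (prevV k m n i j) := by
  rw [Tgraph_adj]
  by_cases h : i.1 = 0
  · refine ⟨by simp [prevV, h, vij], Or.inr ?_⟩
    simp [TrelB, prevV, h, vij]
  · constructor
    · simp only [prevV, if_neg h, vij, ne_eq, Sum.inr.injEq, Option.some.injEq,
        Prod.mk.injEq, Fin.ext_iff]
      intro hcon
      omega
    · refine Or.inr ?_
      simp only [prevV, if_neg h, vij, TrelB]
      have : i.1 = i.1 - 1 + 1 := by omega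
      simp [Fin.ext_iff]
      omega

/-- For `k ≥ 2`, `m, n ≥ 1`, if `c` is an improper interval edge coloring of
`T_{m,n}^{(k)}` with `c(w₁ v₀) = 0`, then `|c(v_i^{(j)} w₁)| ≤ m + (n+1)k − 2`
for every `i ∈ [n]` and `j ∈ [m]`. -/
theorem abs_color_le_of_Tgraph (k m n : ℕ) (hk : 2 ≤ k) (hm : 1 ≤ m) (hn : 1 ≤ n)
    (c : Sym2 (TVertex k m n) → ℤ)
    (hc : IsImproperIntervalColoring (Tgraph k m n) c)
    (h0 : c s(wOne k m n hk, vZero k m n) = 0) :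
    ∀ (i : Fin n) (j : Fin m),
      |c s(vij k m n i j, wOne k m n hk)| ≤ (m : ℤ) + (n + 1) * k - 2 := by
  intro i j
  have hn0 : 0 < n := hn
  -- the main inductive bound on the "previous" edge of each path vertex
  have key : ∀ N : ℕ, ∀ hN : N < n,
      |c s(vij k m n ⟨N, hN⟩ j, prevV k m n ⟨N, hN⟩ j)| ≤ (m : ℤ) + k - 2 + N * k := by
    intro N
    induction N with
    | zero =>
      intro hN
      have hp : prevV k m n ⟨0, hN⟩ j = vZero k m n := by simp [prevV, vZero]
      rw [hp, Sym2.eq_swap]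
      have h₁ : s(vZero k m n, vij k m n ⟨0, hN⟩ j)
          ∈ (Tgraph k m n).incidenceSet (vZero k m n) := by
        rw [SimpleGraph.mk'_mem_incidenceSet_left_iff]
        have := adj_vij_prev k m n ⟨0, hN⟩ j
        rw [show prevV k m n ⟨0, hN⟩ j = vZero k m n from hp] at this
        exact this.symm
      have h₂ : s(wOne k m n hk, vZero k m n)
          ∈ (Tgraph k m n).incidenceSet (vZero k m n) := by
        rw [SimpleGraph.mk'_mem_incidenceSet_right_iff]
        exact adj_w_v0 k m n hk
      have hgap := gap_le (Tgraph k m n) c hc (vZero k m n) (Fv0 k m n hn0)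
        (incset_v0_subset k m n hn0) h₁ h₂
      rw [h0, sub_zero] at hgap
      have hcard := Fv0_card k m n hn0
      have hcard' : ((Fv0 k m n hn0).card : ℤ) ≤ ((k - 1) + m : ℕ) := by
        exact_mod_cast hcard
      have : ((0 : ℕ) : ℤ) * k = 0 := by simp
      rw [this, add_zero]
      have hk' : (2 : ℤ) ≤ k := by exact_mod_cast hk
      have : (((k - 1) + m : ℕ) : ℤ) = (k : ℤ) - 1 + m := by
        push_cast [Nat.cast_sub (by omega : 1 ≤ k)]
        ring
      linarith [hgap, hcard', this.le, this.ge]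
    | succ N ih =>
      intro hN
      have hN' : N < n := by omega
      have hprev : prevV k m n ⟨N + 1, hN⟩ j = vij k m n ⟨N, hN'⟩ j := by
        simp [prevV, vij, Fin.ext_iff]
      have h₁ : s(vij k m n ⟨N + 1, hN⟩ j, prevV k m n ⟨N + 1, hN⟩ j)
          ∈ (Tgraph k m n).incidenceSet (vij k m n ⟨N, hN'⟩ j) := by
        rw [hprev, SimpleGraph.mk'_mem_incidenceSet_right_iff]
        have := adj_vij_prev k m n ⟨N + 1, hN⟩ j
        rwa [hprev] at this
      have h₂ : s(vij k m n ⟨N, hN'⟩ j, prevV k m n ⟨N, hN'⟩ j)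
          ∈ (Tgraph k m n).incidenceSet (vij k m n ⟨N, hN'⟩ j) := by
        rw [SimpleGraph.mk'_mem_incidenceSet_left_iff]
        exact adj_vij_prev k m n ⟨N, hN'⟩ j
      have hgap := gap_le (Tgraph k m n) c hc (vij k m n ⟨N, hN'⟩ j)
        (Fvij k m n ⟨N, hN'⟩ j) (incset_vij_subset k m n ⟨N, hN'⟩ j) h₁ h₂
      have hcard := Fvij_card k m n ⟨N, hN'⟩ j
      have hcard' : ((Fvij k m n ⟨N, hN'⟩ j).card : ℤ) ≤ ((k - 1) + 2 : ℕ) := by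
        exact_mod_cast hcard
      have hk1 : (((k - 1) + 2 : ℕ) : ℤ) = (k : ℤ) + 1 := by
        push_cast [Nat.cast_sub (by omega : 1 ≤ k)]
        ring
      have hgap' : |c s(vij k m n ⟨N + 1, hN⟩ j, prevV k m n ⟨N + 1, hN⟩ j)
          - c s(vij k m n ⟨N, hN'⟩ j, prevV k m n ⟨N, hN'⟩ j)| ≤ (k : ℤ) := by
        calc _ ≤ ((Fvij k m n ⟨N, hN'⟩ j).card : ℤ) - 1 := hgap
          _ ≤ (k : ℤ) := by rw [hk1] at hcard'; omega
      have hih := ih hN'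
      have habs := abs_sub_abs_le_abs_sub
        (c s(vij k m n ⟨N + 1, hN⟩ j, prevV k m n ⟨N + 1, hN⟩ j))
        (c s(vij k m n ⟨N, hN'⟩ j, prevV k m n ⟨N, hN'⟩ j))
      have hcast : ((N + 1 : ℕ) : ℤ) * k = (N : ℤ) * k + k := by push_cast; ring
      rw [hcast]
      linarith
  -- apply the key bound at `i`, then move to the edge to `w₁`
  have hkey := key i.1 i.isLt
  have hieta : (⟨i.1, i.isLt⟩ : Fin n) = i := rfl
  rw [hieta] at hkey
  have h₁ : s(vij k m n i j, wOne k m n hk)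
      ∈ (Tgraph k m n).incidenceSet (vij k m n i j) := by
    rw [SimpleGraph.mk'_mem_incidenceSet_left_iff]
    exact adj_vij_w k m n hk i j
  have h₂ : s(vij k m n i j, prevV k m n i j)
      ∈ (Tgraph k m n).incidenceSet (vij k m n i j) := by
    rw [SimpleGraph.mk'_mem_incidenceSet_left_iff]
    exact adj_vij_prev k m n i j
  have hgap := gap_le (Tgraph k m n) c hc (vij k m n i j)
    (Fvij k m n i j) (incset_vij_subset k m n i j) h₁ h₂
  have hcard := Fvij_card k m n i j
  have hk1 : (((k - 1) + 2 : ℕ) : ℤ) = (k : ℤ) + 1 := by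
    push_cast [Nat.cast_sub (by omega : 1 ≤ k)]
    ring
  have hgap' : |c s(vij k m n i j, wOne k m n hk)
      - c s(vij k m n i j, prevV k m n i j)| ≤ (k : ℤ) := by
    calc _ ≤ ((Fvij k m n i j).card : ℤ) - 1 := hgap
      _ ≤ (k : ℤ) := by
        have : ((Fvij k m n i j).card : ℤ) ≤ ((k - 1) + 2 : ℕ) := by exact_mod_cast hcard
        rw [hk1] at this; omega
  have habs := abs_sub_abs_le_abs_sub
    (c s(vij k m n i j, wOne k m n hk)) (c s(vij k m n i j, prevV k m n i j))
  have hi_le : (i.1 : ℤ) ≤ (n : ℤ) - 1 := by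
    have := i.isLt; omega
  have hmul : (i.1 : ℤ) * k ≤ ((n : ℤ) - 1) * k :=
    mul_le_mul_of_nonneg_right hi_le (by positivity)
  nlinarith [hkey, hgap', habs, hmul]
end

section
/- Fix integers k ≥ 2 and N ≥ 1, and let n be any integer with n ≥ 2k − 3 and n ≥ (2k+3)N. Then for every improper interval edge coloring c of the graph G = T_{n,n}^{(k)}, there exists a color l ∈ ℤ such that at least N edges of the form v_i^{(j)} w_1 (with i, j ∈ [n]) receive color l; in particular |c^{-1}(l) ∩ E_{w_1}| ≥ N. -/
lemma Tadj_iff (k m n : ℕ) (x y : TVertex k m n) :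
    (Tgraph k m n).Adj x y ↔ x ≠ y ∧ (TrelB k m n x y = true ∨ TrelB k m n y x = true) :=
  SimpleGraph.fromRel_adj _ x y

instance TadjDec (k m n : ℕ) : DecidableRel (Tgraph k m n).Adj := fun x y =>
  decidable_of_iff _ (Tadj_iff k m n x y).symm

def Fc (k n : ℕ) (c : Sym2 (TVertex k n n) → ℤ) (v : TVertex k n n) : Finset ℤ :=
  ((Tgraph k n n).incidenceFinset v).image c

lemma mem_Fc_iff {k n : ℕ} {c : Sym2 (TVertex k n n) → ℤ} {v : TVertex k n n} {a : ℤ} :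
    a ∈ Fc k n c v ↔ a ∈ c '' (Tgraph k n n).incidenceSet v := by
  simp [Fc, SimpleGraph.mem_incidenceFinset, Set.mem_image]

lemma color_mem_Fc_left {k n : ℕ} (c : Sym2 (TVertex k n n) → ℤ) {x y : TVertex k n n}
    (h : (Tgraph k n n).Adj x y) : c s(x, y) ∈ Fc k n c x := by
  rw [mem_Fc_iff]
  exact ⟨s(x, y), ⟨(Tgraph k n n).mem_edgeSet.mpr h, Sym2.mem_mk_left x y⟩, rfl⟩

lemma color_mem_Fc_right {k n : ℕ} (c : Sym2 (TVertex k n n) → ℤ) {x y : TVertex k n n}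
    (h : (Tgraph k n n).Adj x y) : c s(x, y) ∈ Fc k n c y := by
  rw [mem_Fc_iff]
  exact ⟨s(x, y), ⟨(Tgraph k n n).mem_edgeSet.mpr h, Sym2.mem_mk_right x y⟩, rfl⟩

lemma Fc_spread {k n : ℕ} {c : Sym2 (TVertex k n n) → ℤ}
    (hc : IsImproperIntervalColoring (Tgraph k n n) c)
    (v : TVertex k n n) (d : ℕ) (hd : (Fc k n c v).card ≤ d) :
    ∀ a ∈ Fc k n c v, ∀ b ∈ Fc k n c v, b - a ≤ (d : ℤ) - 1 := by
  intro a ha b hb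
  have hd1 : 1 ≤ d := le_trans (Finset.card_pos.mpr ⟨a, ha⟩) hd
  rcases le_or_gt b a with h | h
  · omega
  · have hsub : Finset.Icc a b ⊆ Fc k n c v := by
      intro x hx
      rw [Finset.mem_Icc] at hx
      rw [mem_Fc_iff] at ha hb ⊢
      exact hc v a ha b hb x hx.1 hx.2
    have hcard := Finset.card_le_card hsub
    rw [Int.card_Icc] at hcard
    omega

lemma card_Fc_le {k n : ℕ} (c : Sym2 (TVertex k n n) → ℤ) (v : TVertex k n n)
    (B : Finset (TVertex k n n))
    (hB : ∀ y, (Tgraph k n n).Adj v y → y ∈ B) :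
    (Fc k n c v).card ≤ B.card := by
  classical
  have h1 : (Fc k n c v).card ≤ ((Tgraph k n n).incidenceFinset v).card :=
    Finset.card_image_le
  rw [SimpleGraph.card_incidenceFinset_eq_degree] at h1
  refine h1.trans ?_
  rw [← SimpleGraph.card_neighborFinset_eq_degree]
  exact Finset.card_le_card fun y hy => hB y ((Tgraph k n n).mem_neighborFinset v y |>.mp hy)

lemma card_Fc_vij {k n : ℕ} (c : Sym2 (TVertex k n n) → ℤ) (hk : 2 ≤ k) (i j : Fin n) :
    (Fc k n c (vij k n n i j)).card ≤ k + 2 := by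
  classical
  set B : Finset (TVertex k n n) :=
    ((Finset.univ.image (Sum.inl : Fin (k - 1) → TVertex k n n)) ∪ {Sum.inr none}) ∪
      ((Finset.univ.filter
        (fun i' : Fin n => (i' : ℕ) = (i : ℕ) + 1 ∨ (i : ℕ) = (i' : ℕ) + 1)).image
        (fun i' => (Sum.inr (some (i', j)) : TVertex k n n))) with hBdef
  have hB : ∀ y, (Tgraph k n n).Adj (vij k n n i j) y → y ∈ B := by
    intro y hy
    rw [Tadj_iff] at hy
    obtain ⟨hne, hy⟩ := hy
    rcases y with t | (_ | ⟨i', j'⟩)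
    · simp [hBdef]
    · simp [hBdef]
    · simp only [TrelB, vij, decide_eq_true_eq] at hy
      simp only [hBdef, Finset.mem_union, Finset.mem_image, Finset.mem_filter,
        Finset.mem_univ, true_and]
      rcases hy with ⟨h1, h2⟩ | ⟨h1, h2⟩
      · exact Or.inr ⟨i', Or.inl h2, by rw [h1]⟩
      · exact Or.inr ⟨i', Or.inr h2, by rw [h1]⟩
  have hcard : B.card ≤ k + 2 := by
    have c1 : (Finset.univ.image (Sum.inl : Fin (k - 1) → TVertex k n n)).card ≤ k - 1 :=
      le_trans Finset.card_image_le (by simp)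
    have c2 : ((Finset.univ.filter
        (fun i' : Fin n => (i' : ℕ) = (i : ℕ) + 1 ∨ (i : ℕ) = (i' : ℕ) + 1))).card ≤ 2 := by
      rw [Finset.filter_or]
      refine (Finset.card_union_le _ _).trans ?_
      have h1 : (Finset.univ.filter (fun i' : Fin n => (i' : ℕ) = (i : ℕ) + 1)).card ≤ 1 := by
        refine Finset.card_le_one.mpr ?_
        intro a ha b hb
        simp only [Finset.mem_filter] at ha hb
        exact Fin.ext (by omega)
      have h2 : (Finset.univ.filter (fun i' : Fin n => (i : ℕ) = (i' : ℕ) + 1)).card ≤ 1 := by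
        refine Finset.card_le_one.mpr ?_
        intro a ha b hb
        simp only [Finset.mem_filter] at ha hb
        exact Fin.ext (by omega)
      omega
    have c3 := Finset.card_union_le
      ((Finset.univ.image (Sum.inl : Fin (k - 1) → TVertex k n n)) ∪ {Sum.inr none})
      ((Finset.univ.filter
        (fun i' : Fin n => (i' : ℕ) = (i : ℕ) + 1 ∨ (i : ℕ) = (i' : ℕ) + 1)).image
        (fun i' => (Sum.inr (some (i', j)) : TVertex k n n)))
    have c4 := Finset.card_union_le
      (Finset.univ.image (Sum.inl : Fin (k - 1) → TVertex k n n))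
      ({Sum.inr none} : Finset (TVertex k n n))
    have c5 : ((Finset.univ.filter
        (fun i' : Fin n => (i' : ℕ) = (i : ℕ) + 1 ∨ (i : ℕ) = (i' : ℕ) + 1)).image
        (fun i' => (Sum.inr (some (i', j)) : TVertex k n n))).card ≤ 2 :=
      le_trans Finset.card_image_le c2
    have c6 : ({Sum.inr none} : Finset (TVertex k n n)).card = 1 := Finset.card_singleton _
    rw [hBdef]
    omega
  exact le_trans (card_Fc_le c _ B hB) hcard

lemma card_Fc_vZero {k n : ℕ} (c : Sym2 (TVertex k n n) → ℤ) (hk : 2 ≤ k) (hn0 : 0 < n) :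
    (Fc k n c (vZero k n n)).card ≤ n + k - 1 := by
  classical
  set B : Finset (TVertex k n n) :=
    (Finset.univ.image (Sum.inl : Fin (k - 1) → TVertex k n n)) ∪
      (Finset.univ.image
        (fun j' : Fin n => (Sum.inr (some (⟨0, hn0⟩, j')) : TVertex k n n))) with hBdef
  have hB : ∀ y, (Tgraph k n n).Adj (vZero k n n) y → y ∈ B := by
    intro y hy
    rw [Tadj_iff] at hy
    obtain ⟨hne, hy⟩ := hy
    rcases y with t | (_ | ⟨i', j'⟩)
    · simp [hBdef]
    · exact absurd rfl hne
    · simp only [TrelB, vZero, decide_eq_true_eq] at hy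
      simp only [hBdef, Finset.mem_union, Finset.mem_image, Finset.mem_univ, true_and]
      rcases hy with h | h
      · refine Or.inr ⟨j', ?_⟩
        have : i' = ⟨0, hn0⟩ := Fin.ext h
        rw [this]
      · exact absurd h (by simp)
  have hcard : B.card ≤ n + k - 1 := by
    have c1 : (Finset.univ.image (Sum.inl : Fin (k - 1) → TVertex k n n)).card ≤ k - 1 :=
      le_trans Finset.card_image_le (by simp)
    have c2 : (Finset.univ.image
        (fun j' : Fin n => (Sum.inr (some (⟨0, hn0⟩, j')) : TVertex k n n))).card ≤ n :=
      le_trans Finset.card_image_le (by simp)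
    have c3 := Finset.card_union_le
      (Finset.univ.image (Sum.inl : Fin (k - 1) → TVertex k n n))
      (Finset.univ.image
        (fun j' : Fin n => (Sum.inr (some (⟨0, hn0⟩, j')) : TVertex k n n)))
    rw [hBdef]
    omega
  exact le_trans (card_Fc_le c _ B hB) hcard

/-- For `k ≥ 2`, `N ≥ 1`, and `n` with `n ≥ 2k − 3` and `n ≥ (2k+3)N`: for every
improper interval edge coloring `c` of `G = T_{n,n}^{(k)}` there is a color `l ∈ ℤ`
such that at least `N` of the edges `v_i^{(j)} w₁` (`i, j ∈ [n]`) receive color `l`;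
in particular `|c⁻¹(l) ∩ E_{w₁}| ≥ N`. -/
theorem exists_color_repeated_at_wOne (k N n : ℕ) (hk : 2 ≤ k) (hN : 1 ≤ N)
    (hn1 : 2 * k - 3 ≤ n) (hn2 : (2 * k + 3) * N ≤ n)
    (c : Sym2 (TVertex k n n) → ℤ)
    (hc : IsImproperIntervalColoring (Tgraph k n n) c) :
    ∃ l : ℤ,
      N ≤ (Finset.univ.filter (fun p : Fin n × Fin n =>
            c s(vij k n n p.1 p.2, wOne k n n hk) = l)).card ∧
      N ≤ {e | e ∈ (Tgraph k n n).incidenceSet (wOne k n n hk) ∧ c e = l}.ncard := by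
  classical
  have hn0 : 0 < n := by
    have h7 : 7 * 1 ≤ (2 * k + 3) * N := Nat.mul_le_mul (by omega) hN
    omega
  set w1 := wOne k n n hk with hw1
  -- adjacency facts
  have adjw1 : ∀ (i j : Fin n), (Tgraph k n n).Adj (vij k n n i j) w1 := by
    intro i j
    rw [Tadj_iff]
    exact ⟨by simp [vij, hw1, wOne], Or.inr rfl⟩
  have adj0 : ∀ j : Fin n, (Tgraph k n n).Adj (vZero k n n) (vij k n n ⟨0, hn0⟩ j) := by
    intro j
    rw [Tadj_iff]
    exact ⟨by simp [vZero, vij], Or.inl (by simp [TrelB, vZero, vij])⟩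
  have adjstep : ∀ (i : ℕ) (h1 : i < n) (h2 : i + 1 < n) (j : Fin n),
      (Tgraph k n n).Adj (vij k n n ⟨i, h1⟩ j) (vij k n n ⟨i + 1, h2⟩ j) := by
    intro i h1 h2 j
    rw [Tadj_iff]
    refine ⟨?_, Or.inl (by simp [TrelB, vij])⟩
    intro hcon
    simp [vij, Fin.ext_iff] at hcon
  -- spread bounds
  have spread_vij : ∀ (i j : Fin n), ∀ a ∈ Fc k n c (vij k n n i j),
      ∀ b ∈ Fc k n c (vij k n n i j), b - a ≤ (k : ℤ) + 1 := by
    intro i j a ha b hb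
    have h := Fc_spread hc (vij k n n i j) (k + 2) (card_Fc_vij c hk i j) a ha b hb
    push_cast at h ⊢
    linarith
  have spread_v0 : ∀ a ∈ Fc k n c (vZero k n n), ∀ b ∈ Fc k n c (vZero k n n),
      b - a ≤ (n : ℤ) + k - 2 := by
    intro a ha b hb
    have h := Fc_spread hc (vZero k n n) (n + k - 1) (card_Fc_vZero c hk hn0) a ha b hb
    have hcast : ((n + k - 1 : ℕ) : ℤ) = (n : ℤ) + k - 1 := by omega
    rw [hcast] at h
    linarith
  -- chained per-path bound
  have key : ∀ (j : Fin n) (i : ℕ), i < n →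
      ∃ L U : ℤ, U - L ≤ ((k : ℤ) + 1) * ((i : ℤ) + 1) ∧
        ∀ i' : Fin n, (i' : ℕ) ≤ i → ∀ a ∈ Fc k n c (vij k n n i' j), L ≤ a ∧ a ≤ U := by
    intro j i
    induction i with
    | zero =>
      intro h0
      have hmem0 : c s(vij k n n ⟨0, h0⟩ j, w1) ∈ Fc k n c (vij k n n ⟨0, h0⟩ j) :=
        color_mem_Fc_left c (adjw1 ⟨0, h0⟩ j)
      have hne : (Fc k n c (vij k n n ⟨0, h0⟩ j)).Nonempty := ⟨_, hmem0⟩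
      refine ⟨(Fc k n c (vij k n n ⟨0, h0⟩ j)).min' hne,
        (Fc k n c (vij k n n ⟨0, h0⟩ j)).max' hne, ?_, ?_⟩
      · have h := spread_vij ⟨0, h0⟩ j _ (Finset.min'_mem _ hne) _ (Finset.max'_mem _ hne)
        push_cast
        linarith
      · intro i' hi' a ha
        have hieq : i' = ⟨0, h0⟩ := Fin.ext ((by omega : (i' : ℕ) = 0) : i'.val = (⟨0, h0⟩ : Fin n).val)
        rw [hieq] at ha
        exact ⟨Finset.min'_le _ a ha, Finset.le_max' _ a ha⟩
    | succ i ih =>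
      intro hsucc
      have hi : i < n := by omega
      obtain ⟨L, U, hUL, hmem⟩ := ih hi
      have hadj := adjstep i hi hsucc j
      have hx : c s(vij k n n ⟨i, hi⟩ j, vij k n n ⟨i + 1, hsucc⟩ j)
          ∈ Fc k n c (vij k n n ⟨i, hi⟩ j) := color_mem_Fc_left c hadj
      have hx' : c s(vij k n n ⟨i, hi⟩ j, vij k n n ⟨i + 1, hsucc⟩ j)
          ∈ Fc k n c (vij k n n ⟨i + 1, hsucc⟩ j) := color_mem_Fc_right c hadj
      set x := c s(vij k n n ⟨i, hi⟩ j, vij k n n ⟨i + 1, hsucc⟩ j) with hxdef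
      have hne : (Fc k n c (vij k n n ⟨i + 1, hsucc⟩ j)).Nonempty := ⟨_, hx'⟩
      set α := (Fc k n c (vij k n n ⟨i + 1, hsucc⟩ j)).min' hne with hα
      set β := (Fc k n c (vij k n n ⟨i + 1, hsucc⟩ j)).max' hne with hβ
      have hLU : L ≤ x ∧ x ≤ U := hmem ⟨i, hi⟩ (by simp) x hx
      have hαβ : β - α ≤ (k : ℤ) + 1 :=
        spread_vij _ _ _ (Finset.min'_mem _ hne) _ (Finset.max'_mem _ hne)
      have hαx : α ≤ x := Finset.min'_le _ _ hx'
      have hxβ : x ≤ β := Finset.le_max' _ _ hx'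
      refine ⟨min L α, max U β, ?_, ?_⟩
      · have hring : ((k : ℤ) + 1) * (((i : ℤ) + 1) + 1)
            = ((k : ℤ) + 1) * ((i : ℤ) + 1) + ((k : ℤ) + 1) := by ring
        have hgoal : max U β - min L α ≤ ((k : ℤ) + 1) * ((i : ℤ) + 1) + ((k : ℤ) + 1) := by
          rcases max_cases U β with ⟨hm, _⟩ | ⟨hm, _⟩ <;>
            rcases min_cases L α with ⟨hm2, _⟩ | ⟨hm2, _⟩ <;> rw [hm, hm2] <;>
            linarith [hLU.1, hLU.2]
        push_cast
        linarith
      · intro i' hi' a ha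
        rcases Nat.lt_or_ge (i' : ℕ) (i + 1) with h | h
        · have hh := hmem i' (by omega) a ha
          exact ⟨le_trans (min_le_left _ _) hh.1, le_trans hh.2 (le_max_left _ _)⟩
        · have hieq : i' = ⟨i + 1, hsucc⟩ := Fin.ext ((by omega : (i' : ℕ) = i + 1) : i'.val = (⟨i + 1, hsucc⟩ : Fin n).val)
          rw [hieq] at ha
          exact ⟨le_trans (min_le_right _ _) (Finset.min'_le _ a ha),
            le_trans (Finset.le_max' _ a ha) (le_max_right _ _)⟩
  -- global interval for all colors c s(vij, w1)
  have hne0 : (Fc k n c (vZero k n n)).Nonempty :=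
    ⟨_, color_mem_Fc_left c (adj0 ⟨0, hn0⟩)⟩
  set α0 := (Fc k n c (vZero k n n)).min' hne0 with hα0
  set β0 := (Fc k n c (vZero k n n)).max' hne0 with hβ0
  have hβα0 : β0 - α0 ≤ (n : ℤ) + k - 2 :=
    spread_v0 _ (Finset.min'_mem _ hne0) _ (Finset.max'_mem _ hne0)
  set M : ℤ := ((k : ℤ) + 1) * n with hMdef
  have hA : ∀ p : Fin n × Fin n,
      c s(vij k n n p.1 p.2, w1) ∈ Finset.Icc (α0 - M) (β0 + M) := by
    intro p
    obtain ⟨L, U, hUL, hmem⟩ := key p.2 (n - 1) (by omega)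
    have hULn : U - L ≤ M := by
      refine le_trans hUL (le_of_eq ?_)
      have hcast : ((n - 1 : ℕ) : ℤ) + 1 = (n : ℤ) := by omega
      rw [hMdef, ← hcast]
    have hx0 : c s(vZero k n n, vij k n n ⟨0, hn0⟩ p.2) ∈ Fc k n c (vZero k n n) :=
      color_mem_Fc_left c (adj0 p.2)
    have hx0' : c s(vZero k n n, vij k n n ⟨0, hn0⟩ p.2)
        ∈ Fc k n c (vij k n n ⟨0, hn0⟩ p.2) := color_mem_Fc_right c (adj0 p.2)
    have h1 : α0 ≤ c s(vZero k n n, vij k n n ⟨0, hn0⟩ p.2) := Finset.min'_le _ _ hx0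
    have h2 : c s(vZero k n n, vij k n n ⟨0, hn0⟩ p.2) ≤ β0 := Finset.le_max' _ _ hx0
    have h3 := hmem ⟨0, hn0⟩ (by simp) _ hx0'
    have h4 := hmem p.1 (by have := p.1.isLt; omega) _ (color_mem_Fc_left c (adjw1 p.1 p.2))
    rw [Finset.mem_Icc]
    exact ⟨by linarith [h4.1, h3.2], by linarith [h4.2, h3.1]⟩
  set T := Finset.Icc (α0 - M) (β0 + M) with hTdef
  have hT : (T.card : ℤ) ≤ (2 * (k : ℤ) + 3) * n + k := by
    have hcic : T.card = (β0 + M + 1 - (α0 - M)).toNat := Int.card_Icc _ _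
    set R : ℤ := (2 * (k : ℤ) + 3) * n + k with hRdef
    have h2M : β0 + M + 1 - (α0 - M) ≤ R := by
      have hMexp : M = (k : ℤ) * n + n := by rw [hMdef]; ring
      have hRexp : R = 2 * ((k : ℤ) * n) + 3 * n + k := by rw [hRdef]; ring
      linarith [hβα0]
    have h0R : (0 : ℤ) ≤ R := by
      have : (0 : ℤ) ≤ (2 * (k : ℤ) + 3) * n := by positivity
      rw [hRdef]; positivity
    rw [hcic]
    omega
  -- pigeonhole
  obtain ⟨l, hl⟩ : ∃ l : ℤ, N ≤ (Finset.univ.filter (fun p : Fin n × Fin n =>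
      c s(vij k n n p.1 p.2, w1) = l)).card := by
    by_contra hcon
    push_neg at hcon
    have hsum : (Finset.univ : Finset (Fin n × Fin n)).card =
        ∑ l ∈ T, (Finset.univ.filter (fun p : Fin n × Fin n =>
          c s(vij k n n p.1 p.2, w1) = l)).card :=
      Finset.card_eq_sum_card_fiberwise fun p _ => hA p
    have hbound : ∑ l ∈ T, (Finset.univ.filter (fun p : Fin n × Fin n =>
        c s(vij k n n p.1 p.2, w1) = l)).card ≤ T.card * (N - 1) := by
      calc ∑ l ∈ T, (Finset.univ.filter (fun p : Fin n × Fin n =>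
            c s(vij k n n p.1 p.2, w1) = l)).card
          ≤ ∑ _l ∈ T, (N - 1) := Finset.sum_le_sum fun l _ => by
            have := hcon l; omega
        _ = T.card * (N - 1) := by rw [Finset.sum_const, smul_eq_mul]
    have huniv : (Finset.univ : Finset (Fin n × Fin n)).card = n * n := by simp
    have hcards : n * n ≤ T.card * (N - 1) := by omega
    -- contradiction over ℤ
    have hZ : (n : ℤ) * n ≤ (T.card : ℤ) * ((N : ℤ) - 1) := by
      have hc1 : ((N - 1 : ℕ) : ℤ) = (N : ℤ) - 1 := by omega
      have := (Int.ofNat_le.mpr hcards)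
      push_cast at this
      rw [hc1] at this
      exact this
    have hN1 : (0 : ℤ) ≤ (N : ℤ) - 1 := by
      have : (1 : ℤ) ≤ (N : ℤ) := by exact_mod_cast hN
      linarith
    have hc2 : (T.card : ℤ) * ((N : ℤ) - 1) ≤ ((2 * (k : ℤ) + 3) * n + k) * ((N : ℤ) - 1) :=
      mul_le_mul_of_nonneg_right hT hN1
    have hn2' : (2 * (k : ℤ) + 3) * N ≤ (n : ℤ) := by exact_mod_cast hn2
    have e1 : ((2 * (k : ℤ) + 3) * N) * n ≤ (n : ℤ) * n :=
      mul_le_mul_of_nonneg_right hn2' (by positivity)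
    have e4 : (k : ℤ) * ((2 * (k : ℤ) + 3) * N) ≤ (k : ℤ) * n :=
      mul_le_mul_of_nonneg_left hn2' (by positivity)
    have hkZ : (2 : ℤ) ≤ (k : ℤ) := by exact_mod_cast hk
    have hNZ : (1 : ℤ) ≤ (N : ℤ) := by exact_mod_cast hN
    have hnZ : (0 : ℤ) ≤ (n : ℤ) := by positivity
    nlinarith [e1, e4, hZ, hc2, hkZ, hNZ, hnZ, mul_nonneg (mul_nonneg (by linarith : (0:ℤ) ≤ (k:ℤ)) (by linarith : (0:ℤ) ≤ (k:ℤ))) (by linarith : (0:ℤ) ≤ (N:ℤ))]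
  refine ⟨l, hl, ?_⟩
  set s := Finset.univ.filter (fun p : Fin n × Fin n =>
    c s(vij k n n p.1 p.2, w1) = l) with hsdef
  have himg : (s.image (fun p : Fin n × Fin n => (s(vij k n n p.1 p.2, w1) : Sym2 _))).card
      = s.card := by
    rw [Finset.card_image_of_injOn]
    intro p hp q hq hpq
    rw [Sym2.eq_iff] at hpq
    rcases hpq with ⟨h1, _⟩ | ⟨h1, h2⟩
    · simp only [vij, Sum.inr.injEq, Option.some.injEq, Prod.mk.injEq] at h1
      exact Prod.ext h1.1 h1.2
    · exact absurd h1 (by simp [vij, hw1, wOne])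
  have hsub : ↑(s.image (fun p : Fin n × Fin n => (s(vij k n n p.1 p.2, w1) : Sym2 _)))
      ⊆ {e | e ∈ (Tgraph k n n).incidenceSet w1 ∧ c e = l} := by
    intro e he
    simp only [Finset.coe_image, Set.mem_image, Finset.mem_coe] at he
    obtain ⟨p, hp, rfl⟩ := he
    refine ⟨⟨(Tgraph k n n).mem_edgeSet.mpr (adjw1 p.1 p.2), Sym2.mem_mk_right _ _⟩, ?_⟩
    have := (Finset.mem_filter.mp hp).2
    exact this
  calc (N : ℕ) ≤ s.card := hl
    _ = (s.image (fun p : Fin n × Fin n => (s(vij k n n p.1 p.2, w1) : Sym2 _))).card :=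
        himg.symm
    _ = (↑(s.image (fun p : Fin n × Fin n => (s(vij k n n p.1 p.2, w1) : Sym2 _)))
          : Set (Sym2 (TVertex k n n))).ncard := (Set.ncard_coe_finset _).symm
    _ ≤ {e | e ∈ (Tgraph k n n).incidenceSet w1 ∧ c e = l}.ncard :=
        Set.ncard_le_ncard hsub (Set.toFinite _)
end

section
/- Fix an integer k ≥ 2 and an integer n ≥ 2k − 3. Then the interval coloring impropriety of the graph T_{n,n}^{(k)} satisfies impro(T_{n,n}^{(k)}) ≥ n/(2k+3); that is, for every improper interval edge coloring c of T_{n,n}^{(k)} there exist a vertex v and a color l ∈ ℤ with |c^{-1}(l) ∩ E_v| ≥ n/(2k+3). -/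
/-!
The apex `w₁` is adjacent to all `n²` path vertices `v_i^{(j)}`. In an interval colouring the
colours of two edges at a vertex of degree `d` differ by less than `d`. Starting from the edge
`v₀w₁` (at `v₀`, of degree `n + k - 1`) and walking out along a path, whose vertices have degree
at most `k + 1`, every edge `w₁v_i^{(j)}` gets a colour within `R = n + k - 2 + kn` of `c(v₀w₁)`.
So the `n²` edges at `w₁` use at most `2R + 1 ≤ (2k + 3)n` colours, and by pigeonhole one colour
occurs at least `n / (2k + 3)` times.
-/

open SimpleGraph Set

namespace IsImproperIntervalColoring

variable {V : Type*} {G : SimpleGraph V} {c : Sym2 V → ℤ}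

theorem abs_sub_lt_ncard_neighborSet [Finite V] (hc : IsImproperIntervalColoring G c) {v : V}
    {e₁ e₂ : Sym2 V} (h₁ : e₁ ∈ G.incidenceSet v) (h₂ : e₂ ∈ G.incidenceSet v) :
    |c e₁ - c e₂| < (G.neighborSet v).ncard := by
  classical
  have hdeg : (G.incidenceSet v).ncard = (G.neighborSet v).ncard := by
    rw [← Nat.card_coe_set_eq, ← Nat.card_coe_set_eq]
    exact Nat.card_congr (G.incidenceSetEquivNeighborSet v)
  have sub_lt {e e' : Sym2 V} (h : e ∈ G.incidenceSet v) (h' : e' ∈ G.incidenceSet v) :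
      c e - c e' < (G.neighborSet v).ncard := by
    have hsub : Icc (c e') (c e) ⊆ c '' G.incidenceSet v := fun x hx =>
      hc v _ ⟨e', h', rfl⟩ _ ⟨e, h, rfl⟩ x hx.1 hx.2
    have hIcc : (Icc (c e') (c e)).ncard ≤ (G.neighborSet v).ncard :=
      hdeg ▸ (ncard_le_ncard hsub (toFinite _)).trans (ncard_image_le (toFinite _))
    rw [← Finset.coe_Icc, ncard_coe_finset, Int.card_Icc] at hIcc
    omega
  exact abs_sub_lt_iff.2 ⟨sub_lt h₁ h₂, sub_lt h₂ h₁⟩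

end IsImproperIntervalColoring

theorem SimpleGraph.exists_le_ncard_incidenceSet_color_eq {V ι : Type*} [Finite V] [Fintype ι]
    (G : SimpleGraph V) (c : Sym2 V → ℤ) {v : V} {f : ι → Sym2 V} (hf : Function.Injective f)
    (hinc : ∀ i, f i ∈ G.incidenceSet v) {a r : ℤ} (hr : 0 ≤ r) (hcol : ∀ i, |c (f i) - a| ≤ r) :
    ∃ l : ℤ, (Fintype.card ι : ℚ) / (2 * r + 1) ≤
      ({e | e ∈ G.incidenceSet v ∧ c e = l}.ncard : ℚ) := by
  classical
  have hpos : (0 : ℚ) < 2 * r + 1 := by exact_mod_cast (by omega : (0 : ℤ) < 2 * r + 1)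
  have hmaps : ∀ i ∈ (Finset.univ : Finset ι), c (f i) ∈ Finset.Icc (a - r) (a + r) :=
    fun i _ => Finset.mem_Icc.2 (abs_sub_le_iff.1 (hcol i) |>.symm.imp (by omega) (by omega))
  have hcard : (Finset.Icc (a - r) (a + r)).card • ((Fintype.card ι : ℚ) / (2 * r + 1)) ≤
      (Finset.univ : Finset ι).card := by
    have hwidth : ((2 * r + 1).toNat : ℚ) = 2 * r + 1 := by
      exact_mod_cast Int.toNat_of_nonneg (by omega : 0 ≤ 2 * r + 1)
    rw [Int.card_Icc, nsmul_eq_mul, Finset.card_univ, show a + r + 1 - (a - r) = 2 * r + 1 by ring,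
      hwidth, mul_div_cancel₀ _ hpos.ne']
  obtain ⟨l, -, hl⟩ := Finset.exists_le_card_fiber_of_nsmul_le_card_of_maps_to hmaps
    ⟨a, Finset.mem_Icc.2 ⟨by omega, by omega⟩⟩ hcard
  have hfiber : (Finset.univ.filter fun i => c (f i) = l).card ≤
      {e | e ∈ G.incidenceSet v ∧ c e = l}.ncard := by
    rw [← ncard_coe_finset]
    exact ncard_le_ncard_of_injOn f (fun i hi => ⟨hinc i, by simpa using hi⟩) hf.injOn (toFinite _)
  exact ⟨l, hl.trans (by exact_mod_cast hfiber)⟩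

namespace Tgraph

variable {k m n : ℕ}

theorem adj_inl (t : Fin (k - 1)) {x : TVertex k m n} (hx : x ≠ Sum.inl t) :
    (Tgraph k m n).Adj (Sum.inl t) x :=
  (fromRel_adj _ _ _).2 ⟨hx.symm, Or.inl rfl⟩

theorem adj_vZero_vij (h : 0 < n) (j : Fin m) :
    (Tgraph k m n).Adj (vZero k m n) (vij k m n ⟨0, h⟩ j) :=
  (fromRel_adj _ _ _).2 ⟨by simp [vZero, vij], Or.inl (by simp [TrelB, vZero, vij])⟩

theorem adj_vij_succ {i : ℕ} (h : i + 1 < n) (j : Fin m) :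
    (Tgraph k m n).Adj (vij k m n ⟨i, by omega⟩ j) (vij k m n ⟨i + 1, h⟩ j) :=
  (fromRel_adj _ _ _).2 ⟨by simp [vij], Or.inl (by simp [TrelB, vij])⟩

theorem ncard_neighborSet_vZero_le (h : 0 < n) :
    ((Tgraph k m n).neighborSet (vZero k m n)).ncard ≤ k - 1 + m := by
  have hsub : (Tgraph k m n).neighborSet (vZero k m n) ⊆
      range Sum.inl ∪ range (vij k m n ⟨0, h⟩) := by
    rintro (t | _ | ⟨i, j⟩) hadj
    · exact Or.inl ⟨t, rfl⟩
    · exact absurd rfl ((Tgraph k m n).ne_of_adj hadj)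
    · have hi : (i : ℕ) = 0 := by simpa [Tgraph, TrelB, vZero] using hadj
      exact Or.inr ⟨j, by simp [vij, Fin.ext_iff, hi]⟩
  calc _ ≤ (range Sum.inl ∪ range (vij k m n ⟨0, h⟩)).ncard := ncard_le_ncard hsub (toFinite _)
    _ ≤ (range (Sum.inl : Fin (k - 1) → TVertex k m n)).ncard + (range (vij k m n ⟨0, h⟩)).ncard :=
      ncard_union_le _ _
    _ = k - 1 + m := by
      rw [ncard_range_of_injective Sum.inl_injective,
        ncard_range_of_injective fun _ _ hj => by simpa [vij] using hj]
      simp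

theorem ncard_neighborSet_vij_le (i : Fin n) (j : Fin m) :
    ((Tgraph k m n).neighborSet (vij k m n i j)).ncard ≤ k - 1 + 2 := by
  set prev : TVertex k m n :=
    if h : (i : ℕ) = 0 then vZero k m n else vij k m n ⟨i - 1, by omega⟩ j
  -- the `else` branch is an arbitrary filler: the last vertex of a path has no successor
  set next : TVertex k m n :=
    if h : (i : ℕ) + 1 < n then vij k m n ⟨i + 1, h⟩ j else vZero k m n
  have hsub : (Tgraph k m n).neighborSet (vij k m n i j) ⊆ range Sum.inl ∪ {prev, next} := by
    rintro (t | _ | ⟨i', j'⟩) hadj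
    · exact Or.inl ⟨t, rfl⟩
    · have hi : (i : ℕ) = 0 := by simpa [Tgraph, TrelB, vZero, vij] using hadj
      exact Or.inr (Or.inl (by simp [prev, vZero, hi]))
    · simp only [mem_neighborSet, Tgraph, fromRel_adj, TrelB, vij, decide_eq_true_eq] at hadj
      rcases hadj.2 with ⟨rfl, hsucc⟩ | ⟨rfl, hpred⟩
      · have h : (i : ℕ) + 1 < n := hsucc ▸ i'.isLt
        exact Or.inr (Or.inr (by simp [next, h, vij, Fin.ext_iff, hsucc]))
      · exact Or.inr (Or.inl (by simp [prev, vij, hpred]))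
  calc _ ≤ (range Sum.inl ∪ {prev, next}).ncard := ncard_le_ncard hsub (toFinite _)
    _ ≤ (range (Sum.inl : Fin (k - 1) → TVertex k m n)).ncard + ({prev, next} : Set _).ncard :=
      ncard_union_le _ _
    _ ≤ k - 1 + 2 := by
      rw [ncard_range_of_injective Sum.inl_injective, Nat.card_fin]
      exact Nat.add_le_add_left ((ncard_insert_le _ _).trans (by rw [ncard_singleton])) _

end Tgraph

namespace IsImproperIntervalColoring

variable {k m n : ℕ} {c : Sym2 (TVertex k m n) → ℤ}

theorem exists_mem_incidenceSet_vij_abs_sub_le (hc : IsImproperIntervalColoring (Tgraph k m n) c)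
    (hk : 1 ≤ k) {e₀ : Sym2 (TVertex k m n)}
    (he₀ : e₀ ∈ (Tgraph k m n).incidenceSet (vZero k m n)) (j : Fin m) :
    ∀ (i : ℕ) (hi : i < n), ∃ e ∈ (Tgraph k m n).incidenceSet (vij k m n ⟨i, hi⟩ j),
      |c e - c e₀| ≤ m + k - 2 + k * i
  | 0, hi => by
    have hadj := Tgraph.adj_vZero_vij (k := k) hi j
    have hspread := hc.abs_sub_lt_ncard_neighborSet ((mk'_mem_incidenceSet_left_iff _).2 hadj) he₀
    have hdeg := Tgraph.ncard_neighborSet_vZero_le (k := k) (m := m) hi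
    refine ⟨_, (mk'_mem_incidenceSet_right_iff _).2 hadj, ?_⟩
    rw [abs_lt] at hspread
    rw [abs_le]
    omega
  | i + 1, hi => by
    obtain ⟨e, he, hbound⟩ := exists_mem_incidenceSet_vij_abs_sub_le hc hk he₀ j i (by omega)
    have hadj := Tgraph.adj_vij_succ (k := k) hi j
    have hspread := hc.abs_sub_lt_ncard_neighborSet ((mk'_mem_incidenceSet_left_iff _).2 hadj) he
    have hdeg := Tgraph.ncard_neighborSet_vij_le (k := k) (⟨i, by omega⟩ : Fin n) j
    refine ⟨_, (mk'_mem_incidenceSet_right_iff _).2 hadj, ?_⟩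
    rw [abs_lt] at hspread
    rw [abs_le] at hbound ⊢
    push_cast
    rw [mul_add_one]
    omega

theorem abs_sub_le_inl_vij (hc : IsImproperIntervalColoring (Tgraph k m n) c) (hk : 1 ≤ k)
    {e₀ : Sym2 (TVertex k m n)} (he₀ : e₀ ∈ (Tgraph k m n).incidenceSet (vZero k m n))
    (t : Fin (k - 1)) (i : Fin n) (j : Fin m) :
    |c s(Sum.inl t, vij k m n i j) - c e₀| ≤ m + k - 2 + k * n := by
  obtain ⟨e, he, hbound⟩ := hc.exists_mem_incidenceSet_vij_abs_sub_le hk he₀ j i i.isLt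
  have hadj := Tgraph.adj_inl (m := m) (n := n) t (x := vij k m n i j) (by simp [vij])
  have hspread := hc.abs_sub_lt_ncard_neighborSet ((mk'_mem_incidenceSet_right_iff _).2 hadj) he
  have hdeg := Tgraph.ncard_neighborSet_vij_le (k := k) i j
  have hi : (k : ℤ) * i + k ≤ k * n := by
    rw [← mul_add_one]
    exact mul_le_mul_of_nonneg_left (by exact_mod_cast i.isLt) (by positivity)
  rw [abs_lt] at hspread
  rw [abs_le] at hbound ⊢
  omega

end IsImproperIntervalColoring

/-- For `k ≥ 2` and `n ≥ 2k − 3`, the impropriety of `T_{n,n}^{(k)}` is at least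
`n / (2k + 3)`: for every improper interval edge coloring `c` of `T_{n,n}^{(k)}` there
exist a vertex `v` and a color `l ∈ ℤ` with `|c⁻¹(l) ∩ E_v| ≥ n / (2k + 3)`. -/
theorem impropriety_lower_bound_Tgraph (k n : ℕ) (hk : 2 ≤ k) (hn : 2 * k - 3 ≤ n) :
    ∀ c : Sym2 (TVertex k n n) → ℤ, IsImproperIntervalColoring (Tgraph k n n) c →
      ∃ (v : TVertex k n n) (l : ℤ),
        (n : ℚ) / (2 * k + 3) ≤
          ({e | e ∈ (Tgraph k n n).incidenceSet v ∧ c e = l}.ncard : ℚ) := by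
  intro c hc
  let t : Fin (k - 1) := ⟨0, by omega⟩
  have he₀ : s(Sum.inl t, vZero k n n) ∈ (Tgraph k n n).incidenceSet (vZero k n n) :=
    (mk'_mem_incidenceSet_right_iff _).2 (Tgraph.adj_inl t (x := vZero k n n) (by simp [vZero]))
  have hinj : Function.Injective fun p : Fin n × Fin n => s(Sum.inl t, vij k n n p.1 p.2) :=
    fun p q h => by simpa [vij, Prod.ext_iff] using h
  have hR : (0 : ℤ) ≤ n + k - 2 + k * n := add_nonneg (by omega) (by positivity)
  obtain ⟨l, hl⟩ := exists_le_ncard_incidenceSet_color_eq (Tgraph k n n) c hinj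
    (fun p => (mk'_mem_incidenceSet_left_iff _).2 (Tgraph.adj_inl t (by simp [vij]))) hR
    (fun p => hc.abs_sub_le_inl_vij (by omega) he₀ t p.1 p.2)
  refine ⟨Sum.inl t, l, le_trans ?_ hl⟩
  have hRq : (0 : ℚ) ≤ n + k - 2 + k * n := by exact_mod_cast hR
  have hn₀ : (n : ℚ) ≠ 0 := by exact_mod_cast (by omega : n ≠ 0)
  have hwidth : 2 * (n + k - 2 + k * n : ℚ) + 1 ≤ (2 * k + 3) * n := by
    have : (2 * k : ℚ) ≤ n + 3 := by exact_mod_cast (by omega : 2 * k ≤ n + 3)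
    linarith
  rw [Fintype.card_prod, Fintype.card_fin]
  push_cast
  calc (n : ℚ) / (2 * k + 3) = n * n / ((2 * k + 3) * n) := (mul_div_mul_right _ _ hn₀).symm
    _ ≤ n * n / (2 * (n + k - 2 + k * n) + 1) :=
      div_le_div_of_nonneg_left (by positivity) (by linarith) hwidth
end

section
/- Fix integers k ≥ 2, m ≥ 1, n ≥ 1 with n ≥ 2k − 3, and let G = T_{m,n}^{(k)}. Then for every improper interval edge coloring c of G with c(w_1 v_0) = 0, every edge of the form v_i^{(j)} w_1 (with i ∈ [n], j ∈ [m]) receives a color in the integer interval [−m − kn − (k−2), m + kn + (k−2)], which contains exactly 2m + 2kn + 2k − 3 integers. -/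
namespace TAux

lemma mem_colors {V : Type*} (G : SimpleGraph V) (c : Sym2 V → ℤ) {v u : V}
    (h : G.Adj v u) : c s(v, u) ∈ c '' G.incidenceSet v :=
  ⟨s(v, u), G.mk'_mem_incidenceSet_left_iff.mpr h, rfl⟩

lemma incidence_decomp {V : Type*} (G : SimpleGraph V) {v : V} {e : Sym2 V}
    (he : e ∈ G.incidenceSet v) : ∃ u, e = s(v, u) ∧ G.Adj v u := by
  induction e with
  | _ x y =>
    rw [SimpleGraph.mk'_mem_incidenceSet_iff] at he
    obtain ⟨hadj, rfl | rfl⟩ := he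
    · exact ⟨y, rfl, hadj⟩
    · exact ⟨x, Sym2.eq_swap, hadj.symm⟩

lemma key {V : Type*} (G : SimpleGraph V) (c : Sym2 V → ℤ)
    (hc : IsImproperIntervalColoring G c) (v : V) (N : Finset V)
    (hN : ∀ u, G.Adj v u → u ∈ N)
    {a b : ℤ} (ha : a ∈ c '' G.incidenceSet v) (hb : b ∈ c '' G.incidenceSet v) :
    b - a + 1 ≤ (N.card : ℤ) := by
  by_cases hab : a ≤ b
  · have hsub : Finset.Icc a b ⊆ N.image (fun u => c s(v, u)) := by
      intro x hx
      rw [Finset.mem_Icc] at hx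
      obtain ⟨e, he, hcx⟩ := hc v a ha b hb x hx.1 hx.2
      obtain ⟨u, rfl, hadj⟩ := incidence_decomp G he
      exact Finset.mem_image.mpr ⟨u, hN u hadj, hcx⟩
    have h1 := Finset.card_le_card hsub
    have h2 := Finset.card_image_le (s := N) (f := fun u => c s(v, u))
    rw [Int.card_Icc] at h1
    omega
  · have := N.card.zero_le
    omega

variable {k m n : ℕ}

lemma neighbors_v0 (k m n : ℕ) (u : TVertex k m n)
    (h : (Tgraph k m n).Adj (Sum.inr none) u) :
    (∃ l, u = Sum.inl l) ∨ ∃ (h0 : 0 < n) (j : Fin m), u = Sum.inr (some (⟨0, h0⟩, j)) := by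
  rw [Tgraph, SimpleGraph.fromRel_adj] at h
  obtain ⟨hne, h | h⟩ := h
  · rcases u with l | (_ | ⟨i, j⟩)
    · exact Or.inl ⟨l, rfl⟩
    · exact absurd rfl hne
    · simp only [TrelB, decide_eq_true_eq] at h
      exact Or.inr ⟨i.2.trans_le' (by omega), j, by simp [Fin.ext_iff, h]⟩
  · rcases u with l | (_ | ⟨i, j⟩)
    · exact Or.inl ⟨l, rfl⟩
    · exact absurd rfl hne
    · simp [TrelB] at h

lemma neighbors_vij (k m n : ℕ) (i : ℕ) (hi : i < n) (j : Fin m) (u : TVertex k m n)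
    (h : (Tgraph k m n).Adj (Sum.inr (some (⟨i, hi⟩, j))) u) :
    (∃ l, u = Sum.inl l) ∨ (i = 0 ∧ u = Sum.inr none) ∨
    (∃ h2 : i + 1 < n, u = Sum.inr (some (⟨i + 1, h2⟩, j))) ∨
    (∃ (i' : ℕ) (h' : i' < n), i = i' + 1 ∧ u = Sum.inr (some (⟨i', h'⟩, j))) := by
  rw [Tgraph, SimpleGraph.fromRel_adj] at h
  obtain ⟨hne, h | h⟩ := h
  · rcases u with l | (_ | ⟨i', j'⟩)
    · exact Or.inl ⟨l, rfl⟩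
    · simp [TrelB] at h
    · simp only [TrelB, decide_eq_true_eq] at h
      obtain ⟨rfl, h2⟩ := h
      exact Or.inr (Or.inr (Or.inl ⟨h2 ▸ i'.2, by simp [Fin.ext_iff, h2]⟩))
  · rcases u with l | (_ | ⟨i', j'⟩)
    · exact Or.inl ⟨l, rfl⟩
    · simp only [TrelB, decide_eq_true_eq] at h
      exact Or.inr (Or.inl ⟨h, rfl⟩)
    · simp only [TrelB, decide_eq_true_eq] at h
      obtain ⟨rfl, h2⟩ := h
      exact Or.inr (Or.inr (Or.inr ⟨(i' : ℕ), i'.2, h2, by simp⟩))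

lemma adj_w1_v0 (k m n : ℕ) (hk : 2 ≤ k) :
    (Tgraph k m n).Adj (wOne k m n hk) (vZero k m n) := by
  rw [Tgraph, SimpleGraph.fromRel_adj]
  exact ⟨by simp [wOne, vZero], Or.inl rfl⟩

lemma adj_v0_v1 (k m n : ℕ) (h0 : 0 < n) (j : Fin m) :
    (Tgraph k m n).Adj (vZero k m n) (vij k m n ⟨0, h0⟩ j) := by
  rw [Tgraph, SimpleGraph.fromRel_adj]
  exact ⟨by simp [vij, vZero], Or.inl (by simp [TrelB, vZero, vij])⟩

lemma adj_vi_vi1 (k m n : ℕ) (i : ℕ) (hi : i < n) (hi1 : i + 1 < n) (j : Fin m) :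
    (Tgraph k m n).Adj (vij k m n ⟨i, hi⟩ j) (vij k m n ⟨i + 1, hi1⟩ j) := by
  rw [Tgraph, SimpleGraph.fromRel_adj]
  refine ⟨by simp [vij, Fin.ext_iff], Or.inl (by simp [TrelB, vij])⟩

lemma adj_vij_w1 (k m n : ℕ) (hk : 2 ≤ k) (i : Fin n) (j : Fin m) :
    (Tgraph k m n).Adj (vij k m n i j) (wOne k m n hk) := by
  rw [Tgraph, SimpleGraph.fromRel_adj]
  exact ⟨by simp [vij, wOne], Or.inr rfl⟩

end TAux

/-- For `k ≥ 2`, `m ≥ 1`, `n ≥ 1` with `n ≥ 2k − 3`: for every improper interval edge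
coloring `c` of `T_{m,n}^{(k)}` with `c(w₁ v₀) = 0`, every edge `v_i^{(j)} w₁` receives a
color in the integer interval `[−m − kn − (k−2), m + kn + (k−2)]`, which contains exactly
`2m + 2kn + 2k − 3` integers. -/


theorem color_mem_Icc_of_Tgraph (k m n : ℕ) (hk : 2 ≤ k) (hm : 1 ≤ m) (hn : 1 ≤ n)
    (hn2 : 2 * k - 3 ≤ n)
    (c : Sym2 (TVertex k m n) → ℤ)
    (hc : IsImproperIntervalColoring (Tgraph k m n) c)
    (h0 : c s(wOne k m n hk, vZero k m n) = 0) :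
    (∀ (i : Fin n) (j : Fin m),
      c s(vij k m n i j, wOne k m n hk) ∈
        Finset.Icc (-((m : ℤ) + k * n + ((k : ℤ) - 2))) ((m : ℤ) + k * n + ((k : ℤ) - 2))) ∧
    (Finset.Icc (-((m : ℤ) + k * n + ((k : ℤ) - 2))) ((m : ℤ) + k * n + ((k : ℤ) - 2))).card
      = 2 * m + 2 * k * n + 2 * k - 3 := by
  classical
  have hn0 : 0 < n := hn
  set G := Tgraph k m n with hG
  -- the finset of w-vertices
  set W : Finset (TVertex k m n) := Finset.univ.image (Sum.inl : Fin (k-1) → TVertex k m n)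
    with hW
  have hWcard : W.card ≤ k - 1 := by
    calc W.card ≤ (Finset.univ : Finset (Fin (k-1))).card := Finset.card_image_le
      _ = k - 1 := by simp
  -- colors at v0 are bounded
  have h0mem : (0 : ℤ) ∈ c '' G.incidenceSet (vZero k m n) := by
    have := TAux.mem_colors G c (TAux.adj_w1_v0 k m n hk).symm
    rwa [Sym2.eq_swap, h0] at this
  set N0 : Finset (TVertex k m n) :=
    W ∪ Finset.univ.image (fun j : Fin m => (Sum.inr (some (⟨0, hn0⟩, j)) : TVertex k m n))
    with hN0
  have hN0mem : ∀ u, G.Adj (vZero k m n) u → u ∈ N0 := by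
    intro u hu
    rcases TAux.neighbors_v0 k m n u hu with ⟨l, rfl⟩ | ⟨h0', j, rfl⟩
    · exact Finset.mem_union_left _ (Finset.mem_image.mpr ⟨l, Finset.mem_univ _, rfl⟩)
    · exact Finset.mem_union_right _ (Finset.mem_image.mpr ⟨j, Finset.mem_univ _, rfl⟩)
  have hN0card : N0.card ≤ (k - 1) + m := by
    calc N0.card ≤ W.card + _ := Finset.card_union_le _ _
      _ ≤ (k - 1) + m := by
        have : (Finset.univ.image (fun j : Fin m =>
            (Sum.inr (some (⟨0, hn0⟩, j)) : TVertex k m n))).card ≤ m := by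
          calc _ ≤ (Finset.univ : Finset (Fin m)).card := Finset.card_image_le
            _ = m := by simp
        omega
  have hv0bound : ∀ x ∈ c '' G.incidenceSet (vZero k m n), |x| ≤ (m : ℤ) + k - 2 := by
    intro x hx
    have h1 := TAux.key G c hc _ N0 hN0mem h0mem hx
    have h2 := TAux.key G c hc _ N0 hN0mem hx h0mem
    have : (N0.card : ℤ) ≤ (k - 1 : ℕ) + m := by exact_mod_cast hN0card
    rw [abs_le]
    omega
  -- inductive bound along the paths
  have main : ∀ (i : ℕ) (hi : i < n) (j : Fin m),
      ∀ x ∈ c '' G.incidenceSet (vij k m n ⟨i, hi⟩ j),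
      |x| ≤ (m : ℤ) + k - 2 + k * (i + 1) := by
    intro i
    induction i with
    | zero =>
      intro hi j x hx
      -- neighbor finset of v_1^{(j)}
      set nxt : TVertex k m n := if h : 1 < n then vij k m n ⟨1, h⟩ j else vZero k m n
      set N : Finset (TVertex k m n) := W ∪ {vZero k m n, nxt} with hN
      have hNmem : ∀ u, G.Adj (vij k m n ⟨0, hi⟩ j) u → u ∈ N := by
        intro u hu
        rcases TAux.neighbors_vij k m n 0 hi j u hu with
          ⟨l, rfl⟩ | ⟨_, rfl⟩ | ⟨h2, rfl⟩ | ⟨i', h', hi', rfl⟩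
        · exact Finset.mem_union_left _ (Finset.mem_image.mpr ⟨l, Finset.mem_univ _, rfl⟩)
        · exact Finset.mem_union_right _ (by simp [vZero])
        · refine Finset.mem_union_right _ ?_
          have : nxt = vij k m n ⟨0 + 1, h2⟩ j := dif_pos h2
          rw [Finset.mem_insert, Finset.mem_singleton]
          right; rw [this]; rfl
        · omega
      have hNcard : N.card ≤ (k - 1) + 2 := by
        calc N.card ≤ W.card + ({vZero k m n, nxt} : Finset _).card := Finset.card_union_le _ _
          _ ≤ (k - 1) + 2 := by
            have := Finset.card_insert_le (vZero k m n) ({nxt} : Finset (TVertex k m n))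
            simp only [Finset.card_singleton] at this
            omega
      have he : c s(vZero k m n, vij k m n ⟨0, hi⟩ j) ∈ c '' G.incidenceSet (vZero k m n) :=
        TAux.mem_colors G c (TAux.adj_v0_v1 k m n hi j)
      have he' : c s(vZero k m n, vij k m n ⟨0, hi⟩ j)
          ∈ c '' G.incidenceSet (vij k m n ⟨0, hi⟩ j) := by
        have := TAux.mem_colors G c (TAux.adj_v0_v1 k m n hi j).symm
        rwa [Sym2.eq_swap] at this
      have hb := hv0bound _ he
      have h1 := TAux.key G c hc _ N hNmem he' hx
      have h2 := TAux.key G c hc _ N hNmem hx he'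
      have hcast : (N.card : ℤ) ≤ (k - 1 : ℕ) + 2 := by exact_mod_cast hNcard
      have hc2 : (N.card : ℤ) ≤ (k : ℤ) + 1 := by omega
      rw [abs_le] at hb ⊢
      push_cast
      constructor <;> nlinarith [hb.1, hb.2]
    | succ i ih =>
      intro hi j x hx
      have hiprev : i < n := by omega
      set nxt : TVertex k m n := if h : i + 2 < n then vij k m n ⟨i + 2, h⟩ j else vZero k m n
      set N : Finset (TVertex k m n) := W ∪ {vij k m n ⟨i, hiprev⟩ j, nxt} with hN
      have hNmem : ∀ u, G.Adj (vij k m n ⟨i + 1, hi⟩ j) u → u ∈ N := by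
        intro u hu
        rcases TAux.neighbors_vij k m n (i + 1) hi j u hu with
          ⟨l, rfl⟩ | ⟨h', rfl⟩ | ⟨h2, rfl⟩ | ⟨i', h', hi', rfl⟩
        · exact Finset.mem_union_left _ (Finset.mem_image.mpr ⟨l, Finset.mem_univ _, rfl⟩)
        · omega
        · refine Finset.mem_union_right _ ?_
          have : nxt = vij k m n ⟨i + 1 + 1, h2⟩ j := dif_pos h2
          rw [Finset.mem_insert, Finset.mem_singleton]
          right; rw [this]; rfl
        · have : i' = i := by omega
          subst this
          exact Finset.mem_union_right _ (by simp [vij])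
      have hNcard : N.card ≤ (k - 1) + 2 := by
        calc N.card ≤ W.card + _ := Finset.card_union_le _ _
          _ ≤ (k - 1) + 2 := by
            have := Finset.card_insert_le (vij k m n ⟨i, hiprev⟩ j)
              ({nxt} : Finset (TVertex k m n))
            simp only [Finset.card_singleton] at this
            omega
      have he : c s(vij k m n ⟨i, hiprev⟩ j, vij k m n ⟨i + 1, hi⟩ j)
          ∈ c '' G.incidenceSet (vij k m n ⟨i, hiprev⟩ j) :=
        TAux.mem_colors G c (TAux.adj_vi_vi1 k m n i hiprev hi j)
      have he' : c s(vij k m n ⟨i, hiprev⟩ j, vij k m n ⟨i + 1, hi⟩ j)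
          ∈ c '' G.incidenceSet (vij k m n ⟨i + 1, hi⟩ j) := by
        have := TAux.mem_colors G c (TAux.adj_vi_vi1 k m n i hiprev hi j).symm
        rwa [Sym2.eq_swap] at this
      have hb := ih hiprev j _ he
      have h1 := TAux.key G c hc _ N hNmem he' hx
      have h2 := TAux.key G c hc _ N hNmem hx he'
      have hcast : (N.card : ℤ) ≤ (k - 1 : ℕ) + 2 := by exact_mod_cast hNcard
      have hc2 : (N.card : ℤ) ≤ (k : ℤ) + 1 := by omega
      rw [abs_le] at hb ⊢
      push_cast at hb ⊢
      constructor <;> nlinarith [hb.1, hb.2]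
  constructor
  · intro i j
    have hmem : c s(vij k m n i j, wOne k m n hk)
        ∈ c '' G.incidenceSet (vij k m n ⟨(i : ℕ), i.2⟩ j) := by
      have := TAux.mem_colors G c (TAux.adj_vij_w1 k m n hk i j)
      simpa using this
    have hb := main (i : ℕ) i.2 j _ hmem
    rw [abs_le] at hb
    rw [Finset.mem_Icc]
    have hin : ((i : ℕ) : ℤ) + 1 ≤ (n : ℤ) := by exact_mod_cast i.2
    have hk0 : (0 : ℤ) ≤ (k : ℤ) := by positivity
    have hmul : (k : ℤ) * (((i : ℕ) : ℤ) + 1) ≤ (k : ℤ) * n :=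
      mul_le_mul_of_nonneg_left (by linarith) hk0
    exact ⟨by linarith [hb.1], by linarith [hb.2]⟩
  · rw [Int.card_Icc]
    have hkn : (k : ℤ) * n = ((k * n : ℕ) : ℤ) := by push_cast; ring
    have h2 : 2 * k * n = 2 * (k * n) := by ring
    rw [hkn, h2]
    omega
end
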